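/- arXiv:2504.05010 — 3 statements merged into one kernel-verified Lean document; each statement's English description precedes it below -/
import Mathlib

section
/- Fix an integer n ≥ 3 and a real r > 0 with tan(π/n)·sinh(r) < 1. If θ₁, …, θ_n ∈ (0, π) satisfy θ₁ + ⋯ + θ_n = 2π and sinh(r)·tan(θᵢ/2) < 1 for each i, then ∑ᵢ 2·artanh(sinh(r)·tan(θᵢ/2)) ≥ 2n·artanh(tan(π/n)·sinh(r)), with equality iff all θᵢ = 2π/n. (This is the perimeter inequality for tangential hyperbolic n-gons of inradius r.) -/
/-!
With `s = sinh r` and `t = tan (θ / 2)`, the map `θ ↦ 2 artanh (s t)` has derivative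
`s (1 + t²) / (1 - s² t²)`, which increases with `θ` on the interval where `s t < 1`. The map is
therefore strictly convex there, and Jensen's inequality with equal weights (the mean of the angles
being `2π / n`) gives both the bound and its equality case.
-/

open Real

noncomputable def artanh (x : ℝ) : ℝ := Real.log ((1 + x) / (1 - x)) / 2

noncomputable def arccot (x : ℝ) : ℝ := Real.pi / 2 - Real.arctan x

noncomputable def arcosh (x : ℝ) : ℝ := Real.log (x + Real.sqrt (x ^ 2 - 1))

open Set

lemma hasDerivAt_artanh {x : ℝ} (hx : x ∈ Ioo (-1) 1) :
    HasDerivAt _root_.artanh (1 - x ^ 2)⁻¹ x := by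
  have hp : 0 < 1 + x := by linarith [hx.1]
  have hm : 0 < 1 - x := by linarith [hx.2]
  have hq := ((hasDerivAt_id x).const_add 1).div ((hasDerivAt_id x).const_sub 1) hm.ne'
  refine ((hq.log (div_pos hp hm).ne').div_const 2).congr_deriv ?_
  have h2 : 1 - x ^ 2 ≠ 0 := by nlinarith
  simp only [id, Pi.div_apply]
  field_simp
  ring

lemma hasDerivAt_tan_half {x : ℝ} (hx : cos (x / 2) ≠ 0) :
    HasDerivAt (fun y => tan (y / 2)) ((1 + tan (x / 2) ^ 2) / 2) x := by
  have := (hasDerivAt_tan hx).comp x ((hasDerivAt_id x).div_const 2)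
  rw [← inv_one_add_tan_sq hx, one_div, inv_inv] at this
  simpa [Function.comp_def, div_eq_mul_inv] using this

lemma hasDerivAt_two_mul_artanh_mul_tan_half {s x : ℝ} (hx : cos (x / 2) ≠ 0)
    (hsx : s * tan (x / 2) ∈ Ioo (-1) 1) :
    HasDerivAt (fun y => 2 * _root_.artanh (s * tan (y / 2)))
      (s * (1 + tan (x / 2) ^ 2) / (1 - s ^ 2 * tan (x / 2) ^ 2)) x := by
  have hne : 1 - (s * tan (x / 2)) ^ 2 ≠ 0 := by nlinarith [hsx.1, hsx.2]
  refine (((hasDerivAt_artanh hsx).comp x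
    ((hasDerivAt_tan_half hx).const_mul s)).const_mul 2).congr_deriv ?_
  field_simp

lemma strictMonoOn_tan_half : StrictMonoOn (fun x => tan (x / 2)) (Ioo 0 π) :=
  fun x hx y hy hxy => strictMonoOn_tan ⟨by linarith [hx.1, pi_pos], by linarith [hx.2]⟩
    ⟨by linarith [hy.1, pi_pos], by linarith [hy.2]⟩ (by linarith)

lemma tan_half_pos {x : ℝ} (hx : x ∈ Ioo 0 π) : 0 < tan (x / 2) :=
  tan_pos_of_pos_of_lt_pi_div_two (by linarith [hx.1]) (by linarith [hx.2])

lemma ordConnected_setOf_mul_tan_half_lt_one {s : ℝ} (hs : 0 ≤ s) :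
    OrdConnected {x ∈ Ioo 0 π | s * tan (x / 2) < 1} := by
  refine ⟨fun x hx z hz y hy => ?_⟩
  have hy' : y ∈ Ioo 0 π := ⟨hx.1.1.trans_le hy.1, hy.2.trans_lt hz.1.2⟩
  refine ⟨hy', ?_⟩
  calc s * tan (y / 2) ≤ s * tan (z / 2) :=
        mul_le_mul_of_nonneg_left (strictMonoOn_tan_half.monotoneOn hy' hz.1 hy.2) hs
    _ < 1 := hz.2

lemma strictConvexOn_two_mul_artanh_mul_tan_half {s : ℝ} (hs : 0 < s) :
    StrictConvexOn ℝ {x ∈ Ioo 0 π | s * tan (x / 2) < 1}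
      (fun x => 2 * _root_.artanh (s * tan (x / 2))) := by
  set D := {x ∈ Ioo 0 π | s * tan (x / 2) < 1}
  have hderiv : ∀ x ∈ D, HasDerivAt (fun y => 2 * _root_.artanh (s * tan (y / 2)))
      (s * (1 + tan (x / 2) ^ 2) / (1 - s ^ 2 * tan (x / 2) ^ 2)) x := fun x hx =>
    hasDerivAt_two_mul_artanh_mul_tan_half
      (cos_pos_of_mem_Ioo ⟨by linarith [hx.1.1, pi_pos], by linarith [hx.1.2]⟩).ne'
      ⟨by nlinarith [tan_half_pos hx.1], hx.2⟩
  refine StrictMonoOn.strictConvexOn_of_deriv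
    (ordConnected_setOf_mul_tan_half_lt_one hs.le).convex
    (fun x hx => (hderiv x hx).continuousAt.continuousWithinAt) ?_
  refine StrictMonoOn.mono (fun x hx y hy hxy => ?_) interior_subset
  rw [(hderiv x hx).deriv, (hderiv y hy).deriv]
  have hx0 : 0 < tan (x / 2) := tan_half_pos hx.1
  have hsq : tan (x / 2) ^ 2 < tan (y / 2) ^ 2 :=
    pow_lt_pow_left₀ (strictMonoOn_tan_half hx.1 hy.1 hxy) hx0.le two_ne_zero
  have hy1 : (s * tan (y / 2)) ^ 2 < 1 := by
    nlinarith [hy.2, mul_pos hs (tan_half_pos hy.1)]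
  -- the numerator `s (1 + t²)` increases and the denominator `1 - (s t)²` decreases in `t > 0`
  apply div_lt_div₀ <;> nlinarith [mul_pos hs hs]

section Jensen

variable {ι E : Type*} [Fintype ι] [Nonempty ι] [AddCommGroup E] [Module ℝ E] {s : Set E}
  {f : E → ℝ} {p : ι → E}

lemma ConvexOn.card_mul_map_average_le_sum (hf : ConvexOn ℝ s f) (hp : ∀ i, p i ∈ s) :
    Fintype.card ι * f ((Fintype.card ι : ℝ)⁻¹ • ∑ i, p i) ≤ ∑ i, f (p i) := by
  have hcard : (0 : ℝ) < Fintype.card ι := Nat.cast_pos.mpr Fintype.card_pos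
  have h := hf.map_sum_le (t := Finset.univ) (w := fun _ => (Fintype.card ι : ℝ)⁻¹)
    (fun _ _ => (inv_pos.mpr hcard).le) (by simp [hcard.ne']) (fun i _ => hp i)
  rw [← Finset.smul_sum, ← Finset.smul_sum, smul_eq_mul] at h
  rwa [le_inv_mul_iff₀ hcard] at h

lemma StrictConvexOn.sum_eq_card_mul_map_average_iff (hf : StrictConvexOn ℝ s f)
    (hp : ∀ i, p i ∈ s) :
    ∑ i, f (p i) = Fintype.card ι * f ((Fintype.card ι : ℝ)⁻¹ • ∑ i, p i) ↔
      ∀ i, p i = (Fintype.card ι : ℝ)⁻¹ • ∑ i, p i := by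
  have hcard : (0 : ℝ) < Fintype.card ι := Nat.cast_pos.mpr Fintype.card_pos
  have h := hf.map_sum_eq_iff (t := Finset.univ) (w := fun _ => (Fintype.card ι : ℝ)⁻¹)
    (fun _ _ => inv_pos.mpr hcard) (by simp [hcard.ne']) (fun i _ => hp i)
  rw [← Finset.smul_sum, ← Finset.smul_sum, smul_eq_mul] at h
  simp only [Finset.mem_univ, true_implies] at h
  rw [← h, eq_inv_mul_iff_mul_eq₀ hcard.ne', eq_comm]

end Jensen

theorem stmt6_general (n : ℕ) (hn : 3 ≤ n) (r : ℝ) (hr : 0 < r)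
    (θ : Fin n → ℝ) (hθ : ∀ i, θ i ∈ Set.Ioo 0 π)
    (hsum : ∑ i, θ i = 2 * π)
    (hlt : ∀ i, Real.sinh r * Real.tan (θ i / 2) < 1) :
    ∑ i, 2 * _root_.artanh (Real.sinh r * Real.tan (θ i / 2))
      ≥ 2 * n * _root_.artanh (Real.tan (π / n) * Real.sinh r) ∧
    (∑ i, 2 * _root_.artanh (Real.sinh r * Real.tan (θ i / 2))
      = 2 * n * _root_.artanh (Real.tan (π / n) * Real.sinh r) ↔ ∀ i, θ i = 2 * π / n) := by
  have : Nonempty (Fin n) := ⟨⟨0, by omega⟩⟩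
  have hconv := strictConvexOn_two_mul_artanh_mul_tan_half (sinh_pos_iff.mpr hr)
  have hmem : ∀ i, θ i ∈ {x ∈ Ioo 0 π | sinh r * tan (x / 2) < 1} := fun i => ⟨hθ i, hlt i⟩
  have haverage : (Fintype.card (Fin n) : ℝ)⁻¹ • ∑ i, θ i = 2 * π / n := by
    rw [Fintype.card_fin, hsum, smul_eq_mul, inv_mul_eq_div]
  have hregular : 2 * n * _root_.artanh (tan (π / n) * sinh r) =
      Fintype.card (Fin n) * (2 * _root_.artanh (sinh r * tan (2 * π / n / 2))) := by
    rw [Fintype.card_fin, mul_comm (tan _), mul_div_assoc, mul_div_cancel_left₀ _ two_ne_zero]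
    ring
  rw [hregular, ← haverage, ge_iff_le]
  exact ⟨hconv.convexOn.card_mul_map_average_le_sum hmem,
    hconv.sum_eq_card_mul_map_average_iff hmem⟩

theorem stmt6 (n : ℕ) (hn : 3 ≤ n) (r : ℝ) (hr : 0 < r)
    (hreg : Real.tan (π / n) * Real.sinh r < 1)
    (θ : Fin n → ℝ) (hθ : ∀ i, θ i ∈ Set.Ioo 0 π)
    (hsum : ∑ i, θ i = 2 * π)
    (hlt : ∀ i, Real.sinh r * Real.tan (θ i / 2) < 1) :
    ∑ i, 2 * _root_.artanh (Real.sinh r * Real.tan (θ i / 2))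
      ≥ 2 * n * _root_.artanh (Real.tan (π / n) * Real.sinh r) ∧
    (∑ i, 2 * _root_.artanh (Real.sinh r * Real.tan (θ i / 2))
      = 2 * n * _root_.artanh (Real.tan (π / n) * Real.sinh r) ↔ ∀ i, θ i = 2 * π / n) :=
  stmt6_general n hn r hr θ hθ hsum hlt
end

section
/- Fix integers n ≥ 3 and k ≥ 1 and T > 0 with tan(π/n)·sinh(rᵢ) < 1 for each i, where r₁ + ⋯ + r_k = T. Then ∑ᵢ 2n·artanh(tan(π/n)·sinh(rᵢ)) ≥ 2nk·artanh(tan(π/n)·sinh(T/k)), with equality iff all rᵢ = T/k. (Total-perimeter inequality for tangential hyperbolic n-gons with fixed total inradius.) -/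
open Real

/-!
The perimeter of a regular hyperbolic `n`-gon is `2n · g(r)` with `g(x) = artanh (c sinh x)`,
`c = tan (π / n) > 0`. On its domain `0 ≤ x`, `c sinh x < 1`, the function `g` is strictly convex:
`g'(x) = c cosh x / (1 - c² sinh² x)` has increasing numerator and decreasing positive
denominator. Jensen's inequality at the average `T / k` of the inradii, together with the equality
case of Jensen for strictly convex functions, gives both claims.
-/

section Jensen

variable {ι : Type*} [Fintype ι] {s : Set ℝ} {f : ℝ → ℝ} {r : ι → ℝ}

private lemma sum_inv_card_smul (x : ι → ℝ) :
    ∑ i, (Fintype.card ι : ℝ)⁻¹ • x i = (∑ i, x i) / Fintype.card ι := by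
  rw [← Finset.smul_sum, smul_eq_mul, inv_mul_eq_div]

private lemma sum_inv_card (hι : Nonempty ι) : ∑ _i : ι, (Fintype.card ι : ℝ)⁻¹ = 1 := by
  simp [Finset.card_univ, Fintype.card_ne_zero]

theorem ConvexOn.card_mul_map_average_le (hf : ConvexOn ℝ s f) (hr : ∀ i, r i ∈ s) :
    Fintype.card ι * f ((∑ i, r i) / Fintype.card ι) ≤ ∑ i, f (r i) := by
  rcases isEmpty_or_nonempty ι with _ | hι
  · simp
  have hjensen := hf.map_sum_le (t := Finset.univ) (fun _ _ ↦ by positivity)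
    (sum_inv_card hι) (fun i _ ↦ hr i)
  rw [sum_inv_card_smul, sum_inv_card_smul] at hjensen
  have hcard : (0 : ℝ) < Fintype.card ι := by exact_mod_cast Fintype.card_pos
  rwa [le_div_iff₀' hcard] at hjensen

theorem StrictConvexOn.sum_map_eq_card_mul_map_average_iff (hf : StrictConvexOn ℝ s f)
    (hr : ∀ i, r i ∈ s) :
    ∑ i, f (r i) = Fintype.card ι * f ((∑ i, r i) / Fintype.card ι) ↔
      ∀ i, r i = (∑ i, r i) / Fintype.card ι := by
  rcases isEmpty_or_nonempty ι with _ | hι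
  · simp
  have hequal := hf.map_sum_eq_iff (t := Finset.univ) (fun _ _ ↦ by positivity)
    (sum_inv_card hι) (fun i _ ↦ hr i)
  rw [sum_inv_card_smul, sum_inv_card_smul] at hequal
  have hcard : (0 : ℝ) < Fintype.card ι := by exact_mod_cast Fintype.card_pos
  rw [eq_comm, mul_comm (Fintype.card ι : ℝ), ← eq_div_iff hcard.ne', hequal]
  simp

end Jensen

lemma hasDerivAt_artanh_s13 {y : ℝ} (hy : y ∈ Set.Ioo (-1) 1) :
    HasDerivAt _root_.artanh (1 / (1 - y ^ 2)) y := by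
  obtain ⟨hy₁, hy₂⟩ := hy
  have hadd : 0 < 1 + y := by linarith
  have hsub : 0 < 1 - y := by linarith
  have hadd' := ((hasDerivAt_id y).const_add 1).log hadd.ne'
  have hsub' := ((hasDerivAt_id y).const_sub 1).log hsub.ne'
  have hlog : HasDerivAt (fun x ↦ (Real.log (1 + x) - Real.log (1 - x)) / 2)
      ((1 / (1 + y) - -1 / (1 - y)) / 2) y := (hadd'.sub hsub').div_const 2
  have hsq : 1 - y ^ 2 = (1 + y) * (1 - y) := by ring
  refine (hlog.congr_deriv (by rw [hsq]; field_simp; ring)).congr_of_eventuallyEq ?_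
  filter_upwards [Ioo_mem_nhds hy₁ hy₂] with x ⟨hx₁, hx₂⟩
  rw [_root_.artanh, Real.log_div (by linarith) (by linarith)]

lemma hasDerivAt_artanh_mul_sinh {c x : ℝ} (h : c * sinh x ∈ Set.Ioo (-1) 1) :
    HasDerivAt (fun x ↦ _root_.artanh (c * sinh x))
      (c * cosh x / (1 - (c * sinh x) ^ 2)) x := by
  refine ((hasDerivAt_artanh_s13 h).comp x ((hasDerivAt_sinh x).const_mul c)).congr_deriv ?_
  ring

lemma mem_Ico_arsinh_inv_iff {c x : ℝ} (hc : 0 < c) :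
    x ∈ Set.Ico 0 (arsinh c⁻¹) ↔ 0 ≤ x ∧ c * sinh x < 1 := by
  rw [Set.mem_Ico, ← sinh_lt_sinh, sinh_arsinh, ← one_div, lt_div_iff₀' hc]

theorem strictConvexOn_artanh_mul_sinh {c : ℝ} (hc : 0 < c) :
    StrictConvexOn ℝ (Set.Ico 0 (arsinh c⁻¹)) (fun x ↦ _root_.artanh (c * sinh x)) := by
  have hdom : ∀ x ∈ Set.Ico 0 (arsinh c⁻¹), c * sinh x ∈ Set.Ioo (-1) 1 := by
    intro x hx
    obtain ⟨hx₀, hx₁⟩ := (mem_Ico_arsinh_inv_iff hc).1 hx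
    exact ⟨by nlinarith [sinh_nonneg_iff.2 hx₀], hx₁⟩
  refine StrictMonoOn.strictConvexOn_of_deriv (convex_Ico _ _)
    (fun x hx ↦ (hasDerivAt_artanh_mul_sinh (hdom x hx)).continuousAt.continuousWithinAt) ?_
  rw [interior_Ico]
  intro x hx y hy hxy
  have hx' := hdom x (Set.Ioo_subset_Ico_self hx)
  have hy' := hdom y (Set.Ioo_subset_Ico_self hy)
  rw [(hasDerivAt_artanh_mul_sinh hx').deriv, (hasDerivAt_artanh_mul_sinh hy').deriv]
  have hcosh : cosh x < cosh y := cosh_strictMonoOn (Set.mem_Ici.2 hx.1.le) (Set.mem_Ici.2 (hx.1.le.trans hxy.le)) hxy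
  have hsinh : c * sinh x < c * sinh y := mul_lt_mul_of_pos_left (sinh_lt_sinh.2 hxy) hc
  have hsinh₀ : 0 < c * sinh x := mul_pos hc (sinh_pos_iff.2 hx.1)
  have hdenom : 0 < 1 - (c * sinh y) ^ 2 := by nlinarith [hy'.1, hy'.2]
  exact div_lt_div₀ (mul_lt_mul_of_pos_left hcosh hc) (by nlinarith) (by positivity) hdenom

theorem stmt13_general (n k : ℕ) (hn : 3 ≤ n) (T : ℝ)
    (r : Fin k → ℝ) (hr : ∀ i, 0 < r i)
    (hlt : ∀ i, Real.tan (π / n) * Real.sinh (r i) < 1)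
    (hsum : ∑ i, r i = T) :
    ∑ i, 2 * n * _root_.artanh (Real.tan (π / n) * Real.sinh (r i))
      ≥ 2 * n * k * _root_.artanh (Real.tan (π / n) * Real.sinh (T / k)) ∧
    (∑ i, 2 * n * _root_.artanh (Real.tan (π / n) * Real.sinh (r i))
      = 2 * n * k * _root_.artanh (Real.tan (π / n) * Real.sinh (T / k)) ↔ ∀ i, r i = T / k) := by
  have hn' : (3 : ℝ) ≤ n := by exact_mod_cast hn
  have htan : 0 < tan (π / n) := tan_pos_of_pos_of_lt_pi_div_two (by positivity) (by
    rw [div_lt_div_iff₀ (by positivity) two_pos]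
    nlinarith [pi_pos])
  have hmem : ∀ i, r i ∈ Set.Ico 0 (arsinh (tan (π / n))⁻¹) :=
    fun i ↦ (mem_Ico_arsinh_inv_iff htan).2 ⟨(hr i).le, hlt i⟩
  have hconv := strictConvexOn_artanh_mul_sinh htan
  have hle := hconv.convexOn.card_mul_map_average_le hmem
  have hequal := hconv.sum_map_eq_card_mul_map_average_iff hmem
  simp only [Fintype.card_fin, hsum] at hle hequal
  rw [← Finset.mul_sum, mul_assoc (2 * (n : ℝ))]
  exact ⟨by gcongr, (mul_right_inj' (by positivity)).trans hequal⟩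

theorem stmt13 (n k : ℕ) (hn : 3 ≤ n) (hk : 1 ≤ k) (T : ℝ) (hT : 0 < T)
    (r : Fin k → ℝ) (hr : ∀ i, 0 < r i)
    (hlt : ∀ i, Real.tan (π / n) * Real.sinh (r i) < 1)
    (hsum : ∑ i, r i = T)
    (hTk : Real.tan (π / n) * Real.sinh (T / k) < 1) :
    ∑ i, 2 * n * _root_.artanh (Real.tan (π / n) * Real.sinh (r i))
      ≥ 2 * n * k * _root_.artanh (Real.tan (π / n) * Real.sinh (T / k)) ∧
    (∑ i, 2 * n * _root_.artanh (Real.tan (π / n) * Real.sinh (r i))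
      = 2 * n * k * _root_.artanh (Real.tan (π / n) * Real.sinh (T / k)) ↔ ∀ i, r i = T / k) :=
  stmt13_general n k hn T r hr hlt hsum
end

section
/- Fix n ≥ 3, k ≥ 1, and T > 0. Suppose θ₁, …, θ_k ∈ (0, 2·arcsin(√(1 − sin(π/n)))) satisfy ∑ᵢ θᵢ = ((n−2)kπ − T)/n with ((n−2)π − T/k)/n in the same interval. Then ∑ᵢ 2n·arcosh(cos(π/n)/sin(θᵢ/2)) ≥ 2nk·arcosh(cos(π/n)/sin(((n−2)π − T/k)/(2n))), with equality iff all θᵢ are equal. (Minimal total perimeter of k regular hyperbolic n-gons with total area T, each of area exceeding (n−2)π − 2n·arcsin(√(1 − sin(π/n))).) -/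
/-!
The area constraint fixes the mean of the `θᵢ`, so the theorem is Jensen's inequality, with its
equality case, for `f(θ) = arcosh (cos α / sin (θ/2))`, `α = π/n`, once `f` is strictly convex.
Writing `c = cos α`, `m = sin α` and `u = sin² (θ/2)`, one computes `f'(θ) = -c / (2 √ψ(u))` with
`ψ(u) = u (c² - u) / (1 - u) = u - m² u / (1 - u)`, and
`ψ(v) - ψ(u) = (v - u) (1 - m² / ((1 - u)(1 - v)))`. Hence `f'` is strictly increasing while
`u < 1 - m`, i.e. on `0 < θ < 2 arcsin √(1 - sin α)`.
-/

open Real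

open Finset Set

section Jensen

variable {ι : Type*} {s : Set ℝ} {f : ℝ → ℝ} {t : Finset ι} {p : ι → ℝ} {a : ℝ}

lemma Finset.sum_inv_card_smul_eq_of_sum_eq_card_mul (ht : t.Nonempty)
    (hsum : ∑ i ∈ t, p i = #t * a) : ∑ i ∈ t, (#t : ℝ)⁻¹ • p i = a := by
  rw [← smul_sum, hsum, smul_eq_mul, inv_mul_cancel_left₀ (by simpa using ht.card_ne_zero)]

lemma ConvexOn.card_mul_map_le_sum (hf : ConvexOn ℝ s f) (hp : ∀ i ∈ t, p i ∈ s)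
    (hsum : ∑ i ∈ t, p i = #t * a) : #t * f a ≤ ∑ i ∈ t, f (p i) := by
  rcases t.eq_empty_or_nonempty with rfl | ht
  · simp
  have hcard : (0 : ℝ) < #t := by exact_mod_cast ht.card_pos
  have hjensen := hf.map_sum_le (w := fun _ => (#t : ℝ)⁻¹) (fun _ _ => by positivity)
    (by simp [hcard.ne']) hp
  rwa [sum_inv_card_smul_eq_of_sum_eq_card_mul ht hsum, ← smul_sum, smul_eq_mul,
    le_inv_mul_iff₀ hcard] at hjensen

lemma StrictConvexOn.sum_map_eq_card_mul_iff (hf : StrictConvexOn ℝ s f) (hp : ∀ i ∈ t, p i ∈ s)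
    (hsum : ∑ i ∈ t, p i = #t * a) : ∑ i ∈ t, f (p i) = #t * f a ↔ ∀ i ∈ t, p i = a := by
  rcases t.eq_empty_or_nonempty with rfl | ht
  · simp
  have hcard : (0 : ℝ) < #t := by exact_mod_cast ht.card_pos
  have hjensen := hf.map_sum_eq_iff (w := fun _ => (#t : ℝ)⁻¹) (fun _ _ => by positivity)
    (by simp [hcard.ne']) hp
  rwa [sum_inv_card_smul_eq_of_sum_eq_card_mul ht hsum, ← smul_sum, smul_eq_mul,
    eq_inv_mul_iff_mul_eq₀ hcard.ne', eq_comm] at hjensen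

end Jensen

lemma strictMonoOn_mul_sub_div_one_sub {m : ℝ} (hm : 0 ≤ m) :
    StrictMonoOn (fun u => u * (1 - m ^ 2 - u) / (1 - u)) (Ioo 0 (1 - m)) := by
  intro u ⟨hu0, hu1⟩ v ⟨hv0, hv1⟩ huv
  have hmuv : m ^ 2 < (1 - u) * (1 - v) := by nlinarith
  rw [div_lt_div_iff₀ (by linarith) (by linarith)]
  nlinarith [mul_pos (sub_pos.2 huv) (sub_pos.2 hmuv)]

lemma sin_half_pos {θ : ℝ} (hθ : θ ∈ Ioo 0 π) : 0 < sin (θ / 2) :=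
  sin_pos_of_pos_of_lt_pi (by linarith [hθ.1]) (by linarith [hθ.2, pi_pos])

lemma strictMonoOn_sin_half_sq : StrictMonoOn (fun θ => sin (θ / 2) ^ 2) (Ioo 0 π) := by
  intro x hx y hy hxy
  have hsin : sin (x / 2) < sin (y / 2) :=
    strictMonoOn_sin ⟨by linarith [hx.1, pi_pos], by linarith [hx.2]⟩
      ⟨by linarith [hy.1, pi_pos], by linarith [hy.2]⟩ (by linarith)
  have := sin_half_pos hx
  dsimp only
  gcongr

lemma mem_Ioo_pi_and_sin_half_sq_lt {a θ : ℝ} (ha : 0 ≤ a) (hθ : θ ∈ Ioo 0 (2 * arcsin √a)) :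
    θ ∈ Ioo 0 π ∧ sin (θ / 2) ^ 2 < a := by
  have hlt : θ / 2 < arcsin √a := by linarith [hθ.2]
  have hpi : θ / 2 < π / 2 := hlt.trans_le (arcsin_le_pi_div_two _)
  have hθπ : θ ∈ Ioo 0 π := ⟨hθ.1, by linarith⟩
  have hsin : sin (θ / 2) < √a :=
    (lt_arcsin_iff_sin_lt' ⟨by linarith [hθ.1, pi_pos], hpi⟩).1 hlt
  have := sin_half_pos hθπ
  refine ⟨hθπ, ?_⟩
  calc sin (θ / 2) ^ 2 < √a ^ 2 := by gcongr
    _ = a := sq_sqrt ha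

lemma hasDerivAt_arcosh_div_sin_half {c θ : ℝ} (hθ : θ ∈ Ioo 0 π) (hc : sin (θ / 2) < c) :
    HasDerivAt (fun x => _root_.arcosh (c / sin (x / 2)))
      (-(c / (2 * √(sin (θ / 2) ^ 2 * (c ^ 2 - sin (θ / 2) ^ 2) / (1 - sin (θ / 2) ^ 2))))) θ := by
  have hs : 0 < sin (θ / 2) := sin_half_pos hθ
  have hco : 0 < cos (θ / 2) :=
    cos_pos_of_mem_Ioo ⟨by linarith [hθ.1, pi_pos], by linarith [hθ.2]⟩
  have hsin : HasDerivAt (fun x => sin (x / 2)) (cos (θ / 2) * (1 / 2)) θ :=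
    ((hasDerivAt_id' θ).div_const 2).sin
  have h := (Real.hasDerivAt_arcosh ((one_lt_div hs).2 hc)).comp θ
    ((hasDerivAt_const θ c).div hsin hs.ne')
  set r := √(c ^ 2 - sin (θ / 2) ^ 2)
  have hr : 0 < r := sqrt_pos.2 (by nlinarith)
  have hr' : √((c / sin (θ / 2)) ^ 2 - 1) = r / sin (θ / 2) := by
    rw [show (c / sin (θ / 2)) ^ 2 - 1 = (c ^ 2 - sin (θ / 2) ^ 2) / sin (θ / 2) ^ 2 by
      field_simp, sqrt_div' _ (sq_nonneg _), sqrt_sq hs.le]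
  have hψ : √(sin (θ / 2) ^ 2 * (c ^ 2 - sin (θ / 2) ^ 2) / (1 - sin (θ / 2) ^ 2))
      = sin (θ / 2) * r / cos (θ / 2) := by
    rw [← sqrt_sq (by positivity : 0 ≤ sin (θ / 2) * r / cos (θ / 2)), div_pow, mul_pow,
      sq_sqrt (by nlinarith), cos_sq']
  refine h.congr_deriv ?_
  rw [hψ, hr']
  field_simp
  ring

theorem strictConvexOn_arcosh_cos_div_sin_half {α : ℝ} (hα0 : 0 ≤ α) (hα : α < π / 2) :
    StrictConvexOn ℝ (Ioo 0 (2 * arcsin √(1 - sin α)))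
      (fun θ => _root_.arcosh (cos α / sin (θ / 2))) := by
  have hm : 0 ≤ sin α := sin_nonneg_of_nonneg_of_le_pi hα0 (by linarith [pi_pos])
  have hc : 0 < cos α := cos_pos_of_mem_Ioo ⟨by linarith [pi_pos], hα⟩
  have hcm : cos α ^ 2 = 1 - sin α ^ 2 := cos_sq' α
  have hmem : ∀ θ ∈ Ioo 0 (2 * arcsin √(1 - sin α)),
      θ ∈ Ioo 0 π ∧ sin (θ / 2) ^ 2 < 1 - sin α :=
    fun θ => mem_Ioo_pi_and_sin_half_sq_lt (by linarith [sin_le_one α])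
  have hderiv : ∀ θ ∈ Ioo 0 (2 * arcsin √(1 - sin α)), HasDerivAt _ _ θ := fun θ hθ =>
    hasDerivAt_arcosh_div_sin_half (hmem θ hθ).1
      (lt_of_pow_lt_pow_left₀ 2 hc.le (by nlinarith [(hmem θ hθ).2]))
  refine StrictMonoOn.strictConvexOn_of_deriv (convex_Ioo _ _)
    (fun θ hθ => (hderiv θ hθ).continuousAt.continuousWithinAt) ?_
  rw [interior_Ioo]
  refine StrictMonoOn.congr ?_ (fun θ hθ => (hderiv θ hθ).deriv.symm)
  intro x hx y hy hxy
  obtain ⟨hxπ, hxm⟩ := hmem x hx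
  obtain ⟨hyπ, hym⟩ := hmem y hy
  have hx0 := sin_half_pos hxπ
  have hy0 := sin_half_pos hyπ
  have hψ : sin (x / 2) ^ 2 * (cos α ^ 2 - sin (x / 2) ^ 2) / (1 - sin (x / 2) ^ 2)
      < sin (y / 2) ^ 2 * (cos α ^ 2 - sin (y / 2) ^ 2) / (1 - sin (y / 2) ^ 2) := by
    rw [hcm]
    exact strictMonoOn_mul_sub_div_one_sub hm ⟨by positivity, hxm⟩ ⟨by positivity, hym⟩
      (strictMonoOn_sin_half_sq hxπ hyπ hxy)
  have hψ0 : 0 < sin (x / 2) ^ 2 * (cos α ^ 2 - sin (x / 2) ^ 2) / (1 - sin (x / 2) ^ 2) :=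
    div_pos (mul_pos (by positivity) (by nlinarith)) (by nlinarith)
  exact neg_lt_neg (div_lt_div_of_pos_left hc (mul_pos two_pos (sqrt_pos.2 hψ0)) (by gcongr))

theorem stmt18_general (n k : ℕ) (hn : 3 ≤ n) (hk : 1 ≤ k) (T : ℝ)
    (θ : Fin k → ℝ)
    (hθ : ∀ i, θ i ∈ Set.Ioo 0 (2 * Real.arcsin (Real.sqrt (1 - Real.sin (π / n)))))
    (hsum : ∑ i, θ i = ((n - 2 : ℝ) * k * π - T) / n) :
    ∑ i, 2 * n * _root_.arcosh (Real.cos (π / n) / Real.sin (θ i / 2))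
      ≥ 2 * n * k * _root_.arcosh (Real.cos (π / n) / Real.sin (((n - 2 : ℝ) * π - T / k) / (2 * n))) ∧
    (∑ i, 2 * n * _root_.arcosh (Real.cos (π / n) / Real.sin (θ i / 2))
      = 2 * n * k * _root_.arcosh (Real.cos (π / n) / Real.sin (((n - 2 : ℝ) * π - T / k) / (2 * n)))
      ↔ ∀ i, θ i = ((n - 2 : ℝ) * π - T / k) / n) := by
  have hk0 : (k : ℝ) ≠ 0 := by positivity
  have hπn : π / n < π / 2 :=
    div_lt_div_of_pos_left pi_pos two_pos (by exact_mod_cast (by omega : 2 < n))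
  have hconv := strictConvexOn_arcosh_cos_div_sin_half (by positivity) hπn
  set A := ((n - 2 : ℝ) * π - T / k) / n with hA_def
  have hmean : ∑ i, θ i = #(univ : Finset (Fin k)) * A := by
    rw [hsum, card_univ, Fintype.card_fin, hA_def]
    field_simp
  have hA : ((n - 2 : ℝ) * π - T / k) / (2 * n) = A / 2 := by ring
  have hle := hconv.convexOn.card_mul_map_le_sum (fun i _ => hθ i) hmean
  have heq := hconv.sum_map_eq_card_mul_iff (fun i _ => hθ i) hmean
  simp only [card_univ, Fintype.card_fin, Finset.mem_univ, true_implies] at hle heq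
  rw [← mul_sum, hA, mul_assoc (2 * n : ℝ), ge_iff_le, mul_right_inj' (by positivity), heq]
  exact ⟨by gcongr, Iff.rfl⟩

theorem stmt18 (n k : ℕ) (hn : 3 ≤ n) (hk : 1 ≤ k) (T : ℝ) (hT : 0 < T)
    (θ : Fin k → ℝ)
    (hθ : ∀ i, θ i ∈ Set.Ioo 0 (2 * Real.arcsin (Real.sqrt (1 - Real.sin (π / n)))))
    (hsum : ∑ i, θ i = ((n - 2 : ℝ) * k * π - T) / n)
    (havg : ((n - 2 : ℝ) * π - T / k) / n
      ∈ Set.Ioo 0 (2 * Real.arcsin (Real.sqrt (1 - Real.sin (π / n))))) :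
    ∑ i, 2 * n * _root_.arcosh (Real.cos (π / n) / Real.sin (θ i / 2))
      ≥ 2 * n * k * _root_.arcosh (Real.cos (π / n) / Real.sin (((n - 2 : ℝ) * π - T / k) / (2 * n))) ∧
    (∑ i, 2 * n * _root_.arcosh (Real.cos (π / n) / Real.sin (θ i / 2))
      = 2 * n * k * _root_.arcosh (Real.cos (π / n) / Real.sin (((n - 2 : ℝ) * π - T / k) / (2 * n)))
      ↔ ∀ i, θ i = ((n - 2 : ℝ) * π - T / k) / n) :=
  stmt18_general n k hn hk T θ hθ hsum
end
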